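/- arXiv:math/0112067 — 2 statements merged into one kernel-verified Lean document; each statement's English description precedes it below -/
import Mathlib

section
/- Let p ≥ 2. Suppose (A_{j1}, ..., A_{jp}) for j = 1, ..., m are m distinct weak set compositions into p parts such that for every k ∈ {1,...,p} and all distinct i, j ∈ {1,...,m}, either A_{ik} = A_{jk}, or both A_{ik} ∩ ⋃_{l≠k} A_{jl} ≠ ∅ and A_{jk} ∩ ⋃_{l≠k} A_{il} ≠ ∅. Let n ≥ max over j of (|A_{j1}| + ··· + |A_{jp}|). Then the sum over j = 1, ..., m of 1/( (|A_{j1}|+···+|A_{jp}|)! / (|A_{j1}|!···|A_{jp}|!) ) is at most 1, and consequently m is at most the largest p-multinomial coefficient for n. The bound on m is attained for every n and p. -/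
/-!
Lubell's permutation argument. An ordering of the ground set is a block order of a composition
`B` if it lists all of `B 0`, then all of `B 1`, and so on. Two crossing compositions `B ≠ B'`
have no common block order: at the first index `k` where they differ, crossing yields some
`x ∈ B k` lying in a later part of `B'` and some `y ∈ B' k` lying in a later part of `B`, so the
ordering would put `x` before `y` and `y` before `x`. Among the `N!` orderings of an `N`-set, a
composition with part sizes `a` and total `s` has `N! ∏ (a k)! / s!` block orders (choose the
positions of the `s` covered elements, arrange each part and the rest freely), so the terms of the
sum are the fractions of orderings taken by pairwise disjoint sets. Each term is at least the
reciprocal of the largest multinomial coefficient, which bounds `m`. Equality is attained by all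
compositions of `{0, …, n - 1}` whose part sizes form a maximising tuple.
-/

open Finset Function
open scoped Nat

namespace MeshalkinGST

section Fibers

variable {β β' ι : Type*} [Fintype β] [Fintype β'] [DecidableEq ι]

lemma card_fiber_comp_equiv (f : β' → ι) (σ : β ≃ β') (i : ι) :
    Fintype.card {x // f (σ x) = i} = Fintype.card {y // f y = i} :=
  Fintype.card_congr (σ.subtypeEquiv fun _ => Iff.rfl)

theorem card_equiv_comp_eq [DecidableEq β] [DecidableEq β'] [Fintype ι] (f : β → ι) (g : β' → ι)
    (h : ∀ i, Fintype.card {x // f x = i} = Fintype.card {y // g y = i}) :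
    Fintype.card {σ : β ≃ β' // g ∘ σ = f} = ∏ i, (Fintype.card {x // f x = i})! := by
  let e₀ : β ≃ β' := Equiv.ofFiberEquiv fun i => Fintype.equivOfCardEq (h i)
  have he₀ : g ∘ e₀ = f := funext (Equiv.ofFiberEquiv_map _)
  rw [← DomMulAct.stabilizer_card f]
  refine Fintype.card_congr ((Equiv.refl β).equivCongr e₀.symm |>.subtypeEquiv fun σ => ?_)
  rw [← he₀]
  simp [funext_iff]

theorem card_fiberCard_eq_mul_prod_factorial [DecidableEq β] [Fintype ι] (f : β → ι) :
    #{g : β → ι | ∀ i, Fintype.card {x // g x = i} = Fintype.card {x // f x = i}} *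
      ∏ i, (Fintype.card {x // f x = i})! = (Fintype.card β)! := by
  set W : Finset (β → ι) := {g | ∀ i, Fintype.card {x // g x = i} = Fintype.card {x // f x = i}}
  have hW (σ : Equiv.Perm β) : f ∘ σ ∈ W := by
    simpa [W] using card_fiber_comp_equiv f σ
  rw [← Fintype.card_perm, ← card_univ,
    card_eq_sum_card_fiberwise (f := fun σ : Equiv.Perm β => f ∘ σ) (t := W) fun σ _ => hW σ,
    ← smul_eq_mul, ← sum_const]
  refine (sum_congr rfl fun g hg => ?_).symm
  have hg : ∀ i, _ = _ := (mem_filter.1 hg).2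
  rw [← Fintype.card_subtype, card_equiv_comp_eq g f hg]
  exact prod_congr rfl fun i _ => by rw [hg]

theorem exists_monotone_card_fiber {p : ℕ} (a : Fin p → ℕ) :
    ∃ f : Fin (∑ k, a k) → Fin p, Monotone f ∧ ∀ k, Fintype.card {r // f r = k} = a k := by
  let g : Fin (∑ k, a k) → Fin p := fun r => (finSigmaFinEquiv.symm r).1
  refine ⟨g ∘ Tuple.sort g, Tuple.monotone_sort g, fun k => ?_⟩
  rw [comp_def, card_fiber_comp_equiv g, ← Fintype.card_fin (a k)]
  exact Fintype.card_congr <|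
    (finSigmaFinEquiv.symm.subtypeEquiv fun _ => Iff.rfl).trans (Equiv.sigmaSubtype k)

end Fibers

section Compositions

variable {γ : Type*} {p : ℕ}

def Crossing [DecidableEq γ] (B B' : Fin p → Finset γ) : Prop :=
  ∀ k, B k = B' k ∨
    ((B k ∩ (univ.erase k).biUnion B').Nonempty ∧ (B' k ∩ (univ.erase k).biUnion B).Nonempty)

lemma inter_biUnion_erase_nonempty_iff [DecidableEq γ] {s : Finset γ} {B : Fin p → Finset γ}
    {k : Fin p} : (s ∩ (univ.erase k).biUnion B).Nonempty ↔ ∃ x ∈ s, ∃ l ≠ k, x ∈ B l := by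
  simp [Finset.Nonempty]

lemma crossing_map_iff {δ : Type*} [DecidableEq γ] [DecidableEq δ] (e : γ ↪ δ)
    {B B' : Fin p → Finset γ} :
    Crossing (fun k => (B k).map e) (fun k => (B' k).map e) ↔ Crossing B B' := by
  simp [Crossing, inter_biUnion_erase_nonempty_iff]

def IsBlockOrder {β : Type*} [LT β] (B : Fin p → Finset γ) (σ : γ → β) : Prop :=
  ∀ ⦃k l⦄, k < l → ∀ x ∈ B k, ∀ y ∈ B l, σ x < σ y

instance {β : Type*} [LT β] [DecidableLT β] (B : Fin p → Finset γ) (σ : γ → β) :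
    Decidable (IsBlockOrder B σ) := by
  unfold IsBlockOrder; infer_instance

lemma lt_of_mem_of_mem_of_forall_lt_eq {B B' : Fin p → Finset γ} (hB : Pairwise (Disjoint on B))
    {k l : Fin p} (hagree : ∀ i < k, B' i = B i) {x : γ} (hx : x ∈ B k) (hx' : x ∈ B' l)
    (hlk : l ≠ k) : k < l := by
  refine hlk.lt_or_gt.resolve_left fun hlt => ?_
  rw [hagree l hlt] at hx'
  exact disjoint_left.1 (hB hlk) hx' hx

theorem eq_of_isBlockOrder [DecidableEq γ] {β : Type*} [Preorder β] {B B' : Fin p → Finset γ}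
    (hB : Pairwise (Disjoint on B)) (hB' : Pairwise (Disjoint on B')) (hcross : Crossing B B')
    {σ : γ → β} (hσ : IsBlockOrder B σ) (hσ' : IsBlockOrder B' σ) : B = B' := by
  funext k
  induction k using WellFoundedLT.induction with | _ k ih => ?_
  refine (hcross k).resolve_right fun ⟨h, h'⟩ => ?_
  obtain ⟨x, hx, l, hlk, hx'⟩ := inter_biUnion_erase_nonempty_iff.1 h
  obtain ⟨y, hy', l', hl'k, hy⟩ := inter_biUnion_erase_nonempty_iff.1 h'
  have hkl : k < l := lt_of_mem_of_mem_of_forall_lt_eq hB (fun i hi => (ih i hi).symm) hx hx' hlk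
  have hkl' : k < l' := lt_of_mem_of_mem_of_forall_lt_eq hB' ih hy' hy hl'k
  exact lt_asymm (hσ hkl' x hx y hy) (hσ' hkl y hy' x hx')

lemma exists_coloring (B : Fin p → Finset γ) (hB : Pairwise (Disjoint on B)) :
    ∃ c : γ → Option (Fin p), ∀ x k, c x = some k ↔ x ∈ B k := by
  classical
  refine ⟨fun x => if h : ∃ k, x ∈ B k then some h.choose else none, fun x k => ?_⟩
  dsimp only
  split_ifs with h
  · rw [Option.some_inj]
    refine ⟨fun e => e ▸ h.choose_spec, fun hx => ?_⟩
    by_contra hne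
    exact disjoint_left.1 (hB hne) h.choose_spec hx
  · simpa using fun hx => h ⟨k, hx⟩

lemma card_coloring_eq_some [Fintype γ] {B : Fin p → Finset γ} {c : γ → Option (Fin p)}
    (hc : ∀ x k, c x = some k ↔ x ∈ B k) (k : Fin p) :
    Fintype.card {x // c x = some k} = #(B k) := by
  rw [← Fintype.card_coe]
  exact Fintype.card_congr (Equiv.subtypeEquivRight (hc · k))

lemma card_coloring_eq_none [Fintype γ] [DecidableEq γ] {B : Fin p → Finset γ}
    (hB : Pairwise (Disjoint on B)) {c : γ → Option (Fin p)} (hc : ∀ x k, c x = some k ↔ x ∈ B k) :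
    Fintype.card {x // c x = none} = Fintype.card γ - ∑ k, #(B k) := by
  have h (x : γ) : c x = none ↔ x ∉ univ.biUnion B := by
    simp [Option.eq_none_iff_forall_ne_some, hc]
  rw [Fintype.card_congr (Equiv.subtypeEquivRight h), Fintype.card_subtype_compl,
    Fintype.card_coe, card_biUnion fun k _ l _ hkl => hB hkl]

end Compositions

section Spread

variable {p s N : ℕ}

noncomputable def spread (e : Fin s ↪o Fin N) (f : Fin s → Fin p) : Fin N → Option (Fin p) :=
  extend e (some ∘ f) fun _ => none

lemma spread_apply (e : Fin s ↪o Fin N) (f : Fin s → Fin p) (r : Fin s) :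
    spread e f (e r) = some (f r) :=
  e.injective.extend_apply _ _ r

lemma spread_eq_none_iff (e : Fin s ↪o Fin N) (f : Fin s → Fin p) (i : Fin N) :
    spread e f i = none ↔ i ∉ Set.range e := by
  constructor
  · rintro h ⟨r, rfl⟩
    simp [spread_apply] at h
  · exact fun hi => extend_apply' _ _ _ hi

lemma exists_eq_of_spread_eq_some {e : Fin s ↪o Fin N} {f : Fin s → Fin p} {i : Fin N}
    {k : Fin p} (h : spread e f i = some k) : ∃ r, e r = i ∧ f r = k := by
  obtain ⟨r, rfl⟩ : i ∈ Set.range e := by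
    by_contra hi
    simp [(spread_eq_none_iff e f i).2 hi] at h
  exact ⟨r, rfl, Option.some_inj.1 <| (spread_apply e f r).symm.trans h⟩

lemma card_spread_eq_some (e : Fin s ↪o Fin N) (f : Fin s → Fin p) (k : Fin p) :
    Fintype.card {i // spread e f i = some k} = Fintype.card {r // f r = k} := by
  refine (Fintype.card_congr <|
    Equiv.ofBijective (fun r => ⟨e r.1, by rw [spread_apply, r.2]⟩) ⟨?_, ?_⟩).symm
  · exact fun r r' h => Subtype.ext <| e.injective <| congrArg Subtype.val h
  · rintro ⟨i, hi⟩
    obtain ⟨r, rfl, hr⟩ := exists_eq_of_spread_eq_some hi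
    exact ⟨⟨r, hr⟩, rfl⟩

lemma card_spread_eq_none (e : Fin s ↪o Fin N) (f : Fin s → Fin p) :
    Fintype.card {i // spread e f i = none} = N - s := by
  simp_rw [spread_eq_none_iff]
  rw [Fintype.card_subtype_compl, Fintype.card_range, Fintype.card_fin, Fintype.card_fin]

lemma range_eq_of_spread_eq {e e' : Fin s ↪o Fin N} {f f' : Fin s → Fin p}
    (h : spread e f = spread e' f') : Set.range e = Set.range e' := by
  ext i
  rw [← not_iff_not, ← spread_eq_none_iff e f, ← spread_eq_none_iff e' f', h]

lemma le_of_spread_eq_some {e : Fin s ↪o Fin N} {f : Fin s → Fin p} (hf : Monotone f)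
    {i j : Fin N} {k l : Fin p} (hi : spread e f i = some k) (hj : spread e f j = some l)
    (hij : i ≤ j) : k ≤ l := by
  obtain ⟨r, rfl, rfl⟩ := exists_eq_of_spread_eq_some hi
  obtain ⟨r', rfl, rfl⟩ := exists_eq_of_spread_eq_some hj
  exact hf (e.le_iff_le.1 hij)

end Spread

section Counting

variable {γ : Type*} {p : ℕ}

theorem isBlockOrder_of_spread_comp_eq {s N : ℕ} {B : Fin p → Finset γ}
    {c : γ → Option (Fin p)} (hc : ∀ x k, c x = some k ↔ x ∈ B k) {e : Fin s ↪o Fin N}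
    {f : Fin s → Fin p}
    (hf : Monotone f) {σ : γ → Fin N} (hσ : spread e f ∘ σ = c) : IsBlockOrder B σ := by
  intro k l hkl x hx y hy
  have hσ' (z : γ) : spread e f (σ z) = c z := congrFun hσ z
  by_contra hyx
  exact hkl.not_ge <| le_of_spread_eq_some hf ((hσ' y).trans <| (hc y l).2 hy)
    ((hσ' x).trans <| (hc x k).2 hx) (not_lt.1 hyx)

lemma card_spread_comp_eq_coloring [Fintype γ] [DecidableEq γ] {B : Fin p → Finset γ}
    (hB : Pairwise (Disjoint on B)) {c : γ → Option (Fin p)} (hc : ∀ x k, c x = some k ↔ x ∈ B k)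
    (e : Fin (∑ k, #(B k)) ↪o Fin (Fintype.card γ)) {f : Fin (∑ k, #(B k)) → Fin p}
    (hf : ∀ k, Fintype.card {r // f r = k} = #(B k)) :
    Fintype.card {σ : γ ≃ Fin (Fintype.card γ) // spread e f ∘ σ = c} =
      (Fintype.card γ - ∑ k, #(B k))! * ∏ k, (#(B k))! := by
  rw [card_equiv_comp_eq, Fintype.prod_option, card_coloring_eq_none hB hc]
  · simp_rw [card_coloring_eq_some hc]
  · rintro (_ | k)
    · rw [card_coloring_eq_none hB hc, card_spread_eq_none]
    · rw [card_coloring_eq_some hc, card_spread_eq_some, hf]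

theorem factorial_mul_prod_le_card_isBlockOrder_mul [Fintype γ] [DecidableEq γ]
    (B : Fin p → Finset γ) (hB : Pairwise (Disjoint on B)) :
    (Fintype.card γ)! * ∏ k, (#(B k))! ≤
      #{σ : γ ≃ Fin (Fintype.card γ) | IsBlockOrder B σ} * (∑ k, #(B k))! := by
  set N := Fintype.card γ
  set s := ∑ k, #(B k)
  obtain ⟨f, hf, hfib⟩ := exists_monotone_card_fiber fun k => #(B k)
  obtain ⟨c, hc⟩ := exists_coloring B hB
  have hsN : s ≤ N :=
    calc s = #(univ.biUnion B) := (card_biUnion fun k _ l _ hkl => hB hkl).symm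
      _ ≤ N := card_le_univ _
  -- the orderings that put `⋃ k, B k` on the positions `T`, block after block
  let F (T : {T : Finset (Fin N) // #T = s}) : Finset (γ ≃ Fin N) :=
    {σ | spread (T.1.orderEmbOfFin T.2) f ∘ σ = c}
  have hF_card (T) : #(F T) = (N - s)! * ∏ k, (#(B k))! := by
    rw [← Fintype.card_subtype, card_spread_comp_eq_coloring hB hc _ hfib]
  have hF_sub (T) : F T ⊆ ({σ | IsBlockOrder B σ} : Finset (γ ≃ Fin N)) := fun σ hσ =>
    mem_filter.2 ⟨mem_univ _, isBlockOrder_of_spread_comp_eq hc hf (mem_filter.1 hσ).2⟩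
  have hF_disj : ((univ : Finset {T : Finset (Fin N) // #T = s}) : Set _).PairwiseDisjoint F := by
    refine fun T _ T' _ hTT' => disjoint_left.2 fun σ hσ hσ' => hTT' <| Subtype.ext ?_
    have h := σ.surjective.injective_comp_right <|
      (mem_filter.1 hσ).2.trans (mem_filter.1 hσ').2.symm
    rw [← coe_inj, ← range_orderEmbOfFin T.1 T.2, ← range_orderEmbOfFin T'.1 T'.2]
    exact range_eq_of_spread_eq h
  calc N ! * ∏ k, (#(B k))! = N.choose s * ((N - s)! * ∏ k, (#(B k))!) * s ! := by
        rw [← Nat.choose_mul_factorial_mul_factorial hsN]; ring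
    _ = #(univ.biUnion F) * s ! := by
        rw [card_biUnion hF_disj, sum_congr rfl fun T _ => hF_card T, sum_const, card_univ,
          Fintype.card_finset_len, Fintype.card_fin, smul_eq_mul]
    _ ≤ _ := by
        gcongr
        exact biUnion_subset.2 fun T _ => hF_sub T

theorem sum_prod_factorial_div_le_one_of_fintype [Fintype γ] [DecidableEq γ] {m : ℕ}
    (B : Fin m → Fin p → Finset γ) (hinj : Injective B) (hB : ∀ j, Pairwise (Disjoint on B j))
    (hcross : Pairwise fun i j => Crossing (B i) (B j)) :
    ∑ j, (∏ k, ((#(B j k))! : ℝ)) / (∑ k, #(B j k))! ≤ 1 := by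
  set N := Fintype.card γ
  let Sel (j : Fin m) : Finset (γ ≃ Fin N) := {σ | IsBlockOrder (B j) σ}
  have hSel_disj : ((univ : Finset (Fin m)) : Set _).PairwiseDisjoint Sel := by
    intro i _ j _ hij
    exact disjoint_left.2 fun σ hi hj => hij <| hinj <|
      eq_of_isBlockOrder (hB i) (hB j) (hcross hij) (mem_filter.1 hi).2 (mem_filter.1 hj).2
  have hSel_sum : ∑ j, #(Sel j) ≤ N ! := by
    rw [← card_biUnion hSel_disj, ← Fintype.card_equiv (Fintype.equivFin γ)]
    exact card_le_univ _
  have hterm (j : Fin m) : (∏ k, ((#(B j k))! : ℝ)) / (∑ k, #(B j k))! ≤ #(Sel j) / N ! := by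
    rw [div_le_div_iff₀ (by positivity) (by positivity), mul_comm]
    exact_mod_cast factorial_mul_prod_le_card_isBlockOrder_mul (B j) (hB j)
  calc _ ≤ ∑ j, (#(Sel j) : ℝ) / N ! := sum_le_sum fun j _ => hterm j
    _ = ((∑ j, #(Sel j) : ℕ) : ℝ) / N ! := by push_cast; rw [sum_div]
    _ ≤ 1 := div_le_one_of_le₀ (by exact_mod_cast hSel_sum) (by positivity)

theorem sum_prod_factorial_div_le_one {α : Type*} [DecidableEq α] {m : ℕ}
    (A : Fin m → Fin p → Finset α) (hinj : Injective A) (hA : ∀ j, Pairwise (Disjoint on A j))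
    (hcross : Pairwise fun i j => Crossing (A i) (A j)) :
    ∑ j, (∏ k, ((#(A j k))! : ℝ)) / (∑ k, #(A j k))! ≤ 1 := by
  obtain ⟨U, hU⟩ : ∃ U : Finset α, ∀ j k, A j k ⊆ U :=
    ⟨univ.biUnion fun j => univ.biUnion (A j), fun j k =>
      (subset_biUnion_of_mem (A j) (mem_univ k)).trans
        (subset_biUnion_of_mem (fun j => univ.biUnion (A j)) (mem_univ j))⟩
  obtain ⟨B, rfl⟩ : ∃ B : Fin m → Fin p → Finset U,
      A = fun j k => (B j k).map (Embedding.subtype (· ∈ U)) :=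
    ⟨fun j k => (A j k).subtype (· ∈ U), funext₂ fun j k => (subtype_map_of_mem (hU j k)).symm⟩
  simp only [card_map]
  refine sum_prod_factorial_div_le_one_of_fintype B (fun i j h => hinj (by simp only [h]))
    (fun j k l hkl => (disjoint_map _).1 (hA j hkl)) fun i j hij => ?_
  exact (crossing_map_iff _).1 (hcross hij)

end Counting

section Multinomial

variable {p : ℕ}

lemma prod_factorial_div_factorial_sum_eq_inv {ι : Type*} (s : Finset ι) (a : ι → ℕ) :
    (∏ i ∈ s, ((a i)! : ℝ)) / (∑ i ∈ s, a i)! = (Nat.multinomial s a : ℝ)⁻¹ := by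
  rw [← Nat.multinomial_spec s a]
  push_cast
  field_simp

lemma card_le_of_sum_inv_le_one {ι : Type*} (s : Finset ι) {x : ι → ℕ} {M : ℕ}
    (hx : ∀ i ∈ s, 0 < x i) (hxM : ∀ i ∈ s, x i ≤ M) (h : ∑ i ∈ s, (x i : ℝ)⁻¹ ≤ 1) : #s ≤ M := by
  have : (#s : ℝ) ≤ M :=
    calc (#s : ℝ) = ∑ i ∈ s, 1 := by simp
      _ ≤ ∑ i ∈ s, M * (x i : ℝ)⁻¹ := sum_le_sum fun i hi => by
          rw [← div_eq_mul_inv, one_le_div (by exact_mod_cast hx i hi)]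
          exact_mod_cast hxM i hi
      _ = M * ∑ i ∈ s, (x i : ℝ)⁻¹ := (mul_sum ..).symm
      _ ≤ M := mul_le_of_le_one_right (Nat.cast_nonneg _) h
  exact_mod_cast this

lemma multinomial_le_sup_antidiagonalTuple (hp : 0 < p) {a : Fin p → ℕ} {n : ℕ}
    (ha : ∑ k, a k ≤ n) :
    Nat.multinomial univ a ≤ (Nat.antidiagonalTuple p n).sup (Nat.multinomial univ) := by
  let k₀ : Fin p := ⟨0, hp⟩
  let b := update a k₀ (a k₀ + (n - ∑ k, a k))
  have hsplit (g : Fin p → ℕ) : ∑ k, g k = g k₀ + ∑ k ∈ univ.erase k₀, g k :=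
    (add_sum_erase _ _ (mem_univ k₀)).symm
  have hba : ∀ k ∈ univ.erase k₀, b k = a k := fun k hk => update_of_ne (ne_of_mem_erase hk) ..
  have hb₀ : b k₀ = a k₀ + (n - ∑ k, a k) := update_self ..
  have hb : b ∈ Nat.antidiagonalTuple p n := by
    rw [Nat.mem_antidiagonalTuple, hsplit, sum_congr rfl hba, hb₀, add_right_comm, ← hsplit]
    omega
  refine le_trans ?_ (le_sup hb)
  rw [← insert_erase (mem_univ k₀), Nat.multinomial_insert (notMem_erase _ _),
    Nat.multinomial_insert (notMem_erase _ _), Nat.multinomial_congr hba, sum_congr rfl hba,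
    hb₀, Nat.choose_symm_add, Nat.choose_symm_add]
  gcongr
  omega

end Multinomial

section Tightness

variable {β : Type*} [Fintype β] {p : ℕ}

def fibers (g : β → Fin p) (k : Fin p) : Finset β := {x | g x = k}

lemma fibers_injective : Injective (fibers : (β → Fin p) → Fin p → Finset β) := fun g g' h =>
  funext fun x => by
    have hx : x ∈ fibers g' (g x) := congrFun h (g x) ▸ mem_filter.2 ⟨mem_univ x, rfl⟩
    exact (mem_filter.1 hx).2.symm

lemma pairwise_disjoint_fibers (g : β → Fin p) : Pairwise (Disjoint on fibers g) :=
  fun _ _ hkl => disjoint_filter.2 fun _ _ hk hl => hkl (hk.symm.trans hl)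

lemma sum_card_fibers (g : β → Fin p) : ∑ k, #(fibers g k) = Fintype.card β :=
  (card_eq_sum_card_fiberwise fun x _ => mem_univ (g x)).symm

lemma inter_biUnion_fibers_nonempty [DecidableEq β] {g g' : β → Fin p} {k : Fin p}
    (hcard : #(fibers g' k) ≤ #(fibers g k)) (hne : fibers g k ≠ fibers g' k) :
    (fibers g k ∩ (univ.erase k).biUnion (fibers g')).Nonempty := by
  obtain ⟨x, hx, hx'⟩ := not_subset.1 fun hsub => hne (eq_of_subset_of_card_le hsub hcard)
  refine inter_biUnion_erase_nonempty_iff.2 ⟨x, hx, g' x, fun hgx => hx' ?_, ?_⟩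
  · simp [fibers, hgx]
  · simp [fibers]

lemma crossing_fibers [DecidableEq β] {g g' : β → Fin p} (h : ∀ k, #(fibers g k) = #(fibers g' k)) :
    Crossing (fibers g) (fibers g') := fun k =>
  or_iff_not_imp_left.2 fun hk =>
    ⟨inter_biUnion_fibers_nonempty (h k).ge hk, inter_biUnion_fibers_nonempty (h k).le (Ne.symm hk)⟩

theorem exists_crossing_family_card_eq_sup (hp : 0 < p) (n : ℕ) :
    ∃ (m : ℕ) (A : Fin m → Fin p → Finset ℕ), Injective A ∧ (∀ j, Pairwise (Disjoint on A j)) ∧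
      (Pairwise fun i j => Crossing (A i) (A j)) ∧ (∀ j, ∑ k, #(A j k) = n) ∧
      m = (Nat.antidiagonalTuple p n).sup (Nat.multinomial univ) := by
  obtain ⟨a, ha, haM⟩ := exists_mem_eq_sup (Nat.antidiagonalTuple p n)
    ⟨Pi.single ⟨0, hp⟩ n, by rw [Nat.mem_antidiagonalTuple, sum_pi_single']; simp⟩
    (Nat.multinomial univ)
  obtain rfl : ∑ k, a k = n := Nat.mem_antidiagonalTuple.1 ha
  obtain ⟨f, -, hf⟩ := exists_monotone_card_fiber a
  let W : Finset (Fin (∑ k, a k) → Fin p) := {g | ∀ k, Fintype.card {x // g x = k} = a k}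
  have hW : #W = Nat.multinomial univ a := by
    have := card_fiberCard_eq_mul_prod_factorial f
    simp only [hf, Fintype.card_fin] at this
    rw [← Nat.multinomial_spec, mul_comm] at this
    exact Nat.eq_of_mul_eq_mul_left (prod_pos fun k _ => Nat.factorial_pos _) this
  have hWfib (g : W) (k : Fin p) : #(fibers g.1 k) = a k := by
    rw [fibers, ← Fintype.card_subtype, (mem_filter.1 g.2).2 k]
  refine ⟨#W, fun j k => (fibers (W.equivFin.symm j).1 k).map Fin.valEmbedding, ?_, ?_, ?_, ?_, ?_⟩
  · exact (map_injective _).comp_left.comp <|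
      fibers_injective.comp <| Subtype.val_injective.comp W.equivFin.symm.injective
  · exact fun j k l hkl => (disjoint_map _).2 (pairwise_disjoint_fibers _ hkl)
  · exact fun i j _ => (crossing_map_iff _).2 <| crossing_fibers fun k => by rw [hWfib, hWfib]
  · intro j
    simp only [card_map]
    rw [sum_card_fibers, Fintype.card_fin]
  · rw [hW, haM]

end Tightness

end MeshalkinGST

/-- **Meshalkin–Griggs–Stahl–Trotter corollary.** Let `p ≥ 2`. Suppose
`(A_{j1}, …, A_{jp})`, `j = 1, …, m`, are distinct weak set compositions into `p` parts
such that for every `k ∈ [p]` and all distinct `i, j ∈ [m]` either `A_{ik} = A_{jk}` or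
`A_{ik} ∩ ⋃_{l≠k} A_{jl} ≠ ∅ ≠ A_{jk} ∩ ⋃_{l≠k} A_{il}`, and let
`n ≥ max_j (|A_{j1}| + ⋯ + |A_{jp}|)`. Then
`∑_j 1/((|A_{j1}|+⋯+|A_{jp}|)!/(|A_{j1}|! ⋯ |A_{jp}|!)) ≤ 1`, and consequently `m` is at
most the largest `p`-multinomial coefficient for `n`; the bound on `m` is attained for
every `n` and `p`. -/
theorem meshalkin_gst (p : ℕ) (hp : 2 ≤ p) :
    (∀ (α : Type) [DecidableEq α], ∀ (n m : ℕ) (A : Fin m → Fin p → Finset α),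
      Function.Injective A →
      (∀ j, ∀ k l : Fin p, k ≠ l → Disjoint (A j k) (A j l)) →
      (∀ k : Fin p, ∀ i j : Fin m, i ≠ j → (A i k = A j k ∨
        ((A i k ∩ (Finset.univ.erase k).biUnion (A j)).Nonempty ∧
         (A j k ∩ (Finset.univ.erase k).biUnion (A i)).Nonempty))) →
      (∀ j, ∑ k, (A j k).card ≤ n) →
      (∑ j, (1 : ℝ) /
          (((∑ k, (A j k).card).factorial : ℝ) / ∏ k, ((A j k).card.factorial : ℝ)) ≤ 1) ∧
      m ≤ (Finset.Nat.antidiagonalTuple p n).sup (fun a => Nat.multinomial Finset.univ a)) ∧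
    (∀ n : ℕ, ∃ (m : ℕ) (A : Fin m → Fin p → Finset ℕ),
      Function.Injective A ∧
      (∀ j, ∀ k l : Fin p, k ≠ l → Disjoint (A j k) (A j l)) ∧
      (∀ k : Fin p, ∀ i j : Fin m, i ≠ j → (A i k = A j k ∨
        ((A i k ∩ (Finset.univ.erase k).biUnion (A j)).Nonempty ∧
         (A j k ∩ (Finset.univ.erase k).biUnion (A i)).Nonempty))) ∧
      (∀ j, ∑ k, (A j k).card ≤ n) ∧
      m = (Finset.Nat.antidiagonalTuple p n).sup (fun a => Nat.multinomial Finset.univ a)) := by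
  have hp₀ : 0 < p := by omega
  refine ⟨fun α _ n m A hinj hdisj hcross hsum => ?_, fun n => ?_⟩
  · have hlym := MeshalkinGST.sum_prod_factorial_div_le_one A hinj
      (fun j _ _ hkl => hdisj j _ _ hkl) fun i j hij k => hcross k i j hij
    refine ⟨by simpa only [one_div_div] using hlym, ?_⟩
    simp only [MeshalkinGST.prod_factorial_div_factorial_sum_eq_inv] at hlym
    simpa using MeshalkinGST.card_le_of_sum_inv_le_one univ (fun j _ => Nat.multinomial_pos _ _)
      (fun j _ => MeshalkinGST.multinomial_le_sup_antidiagonalTuple hp₀ (hsum j)) hlym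
  · obtain ⟨m, A, hinj, hdisj, hcross, hsum, hm⟩ :=
      MeshalkinGST.exists_crossing_family_card_eq_sup hp₀ n
    exact ⟨m, A, hinj, fun j _ _ hkl => hdisj j hkl, fun k i j hij => hcross hij k,
      fun j => (hsum j).le, hm⟩
end

section
/- Let M_1, ..., M_N be real numbers with M_1 ≥ M_2 ≥ ··· ≥ M_N ≥ 0, let R be an integer with 1 ≤ R ≤ N and M_R > 0, and let q_1, ..., q_N ∈ [0,1] satisfy q_1 + ··· + q_N ≤ R. Let R' be the number of indices k with M_k > M_R and R'' the largest index k with M_k = M_R. Then q_1 M_1 + ··· + q_N M_N = M_1 + ··· + M_R if and only if q_k = 1 for every k with M_k > M_R, q_k = 0 for every k with M_k < M_R, and q_{R'+1} + ··· + q_{R''} = R − R'. -/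
/-!
Put `c = M_R`. Splitting `q_k M_k = q_k (M_k - c) + q_k c` and using monotonicity,
`∑_{k ≤ R} M_k - ∑_k q_k M_k = ∑_k ((M_k - c)⁺ - q_k (M_k - c)) + c (R - ∑_k q_k)`,
a sum of nonnegative terms because `0 ≤ q_k ≤ 1` and `∑_k q_k ≤ R` (the bathtub principle).
So equality holds iff every term vanishes, i.e. `q_k = 1` where `M_k > c`, `q_k = 0` where
`M_k < c`, and `∑_k q_k = R`. Since `M` is nonincreasing, the indices with `M_k > c` are exactly
`1, …, R'` and those with `M_k < c` exactly `R'' + 1, …, N`, so the last condition reads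
`q_{R'+1} + ⋯ + q_{R''} = R - R'`.
-/

open Finset

section OrderedField

variable {K : Type*} [Field K] [LinearOrder K] [IsStrictOrderedRing K]

lemma mul_le_posPart {q : K} (hq : q ∈ Set.Icc 0 1) (x : K) : q * x ≤ x⁺ := by
  rcases le_total 0 x with hx | hx
  · rw [posPart_of_nonneg hx]; nlinarith [hq.2]
  · rw [posPart_of_nonpos hx]; nlinarith [hq.1]

lemma mul_eq_posPart_iff (q x : K) : q * x = x⁺ ↔ (0 < x → q = 1) ∧ (x < 0 → q = 0) := by
  rcases lt_trichotomy x 0 with hx | rfl | hx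
  · simp [posPart_of_nonpos hx.le, hx, hx.ne, not_lt_of_gt hx]
  · simp
  · rw [posPart_of_nonneg hx.le]
    simp [hx, not_lt_of_gt hx, hx.ne']

omit [IsStrictOrderedRing K] in
lemma sum_posPart_add_sub_sum_mul {ι : Type*} (s : Finset ι) (q f : ι → K) (c r : K) :
    ∑ i ∈ s, (f i - c)⁺ + r * c - ∑ i ∈ s, q i * f i =
      ∑ i ∈ s, ((f i - c)⁺ - q i * (f i - c)) + c * (r - ∑ i ∈ s, q i) := by
  simp only [mul_sub, sum_sub_distrib, ← sum_mul]
  ring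

variable {ι : Type*} {s : Finset ι} {q f : ι → K} {c r : K}

theorem sum_mul_eq_sum_posPart_add_iff (hq : ∀ i ∈ s, q i ∈ Set.Icc 0 1) (hc : 0 < c)
    (hqr : ∑ i ∈ s, q i ≤ r) :
    ∑ i ∈ s, q i * f i = ∑ i ∈ s, (f i - c)⁺ + r * c ↔
      (∀ i ∈ s, c < f i → q i = 1) ∧ (∀ i ∈ s, f i < c → q i = 0) ∧
        ∑ i ∈ s, q i = r := by
  have hterm : ∀ i ∈ s, 0 ≤ (f i - c)⁺ - q i * (f i - c) :=
    fun i hi => sub_nonneg.2 (mul_le_posPart (hq i hi) _)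
  have hslack : 0 ≤ c * (r - ∑ i ∈ s, q i) := mul_nonneg hc.le (sub_nonneg.2 hqr)
  rw [eq_comm, ← sub_eq_zero, sum_posPart_add_sub_sum_mul,
    add_eq_zero_iff_of_nonneg (sum_nonneg hterm) hslack, sum_eq_zero_iff_of_nonneg hterm,
    mul_eq_zero, or_iff_right hc.ne', sub_eq_zero, eq_comm (a := r), ← and_assoc]
  refine and_congr_left' ?_
  simp only [sub_eq_zero, eq_comm (a := (f _ - c)⁺), mul_eq_posPart_iff, sub_pos, sub_neg]
  exact forall₂_and

lemma sum_Icc_eq_sum_posPart_add {N R : ℕ} (hR1 : 1 ≤ R) (hRN : R ≤ N) {M : ℕ → K}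
    (hmono : ∀ i j, 1 ≤ i → i ≤ j → j ≤ N → M j ≤ M i) :
    ∑ i ∈ Icc 1 R, M i = ∑ i ∈ Icc 1 N, (M i - M R)⁺ + R * M R := by
  have hpos : ∑ i ∈ Icc 1 N, (M i - M R)⁺ = ∑ i ∈ Icc 1 R, (M i - M R) := by
    rw [← sum_subset (Icc_subset_Icc_right hRN)]
    · refine sum_congr rfl fun i hi => posPart_of_nonneg (sub_nonneg.2 ?_)
      exact hmono i R (mem_Icc.1 hi).1 (mem_Icc.1 hi).2 hRN
    · intro i hiN hiR
      simp only [mem_Icc, not_and, not_le] at hiN hiR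
      exact posPart_of_nonpos (sub_nonpos.2 (hmono R i hR1 (hiR hiN.1).le hiN.2))
  rw [hpos, sum_sub_distrib, sum_const, Nat.card_Icc, nsmul_eq_mul, Nat.add_sub_cancel]
  ring

end OrderedField

lemma filter_Icc_eq_Icc_card {N : ℕ} {p : ℕ → Prop} [DecidablePred p]
    (hp : ∀ i j, 1 ≤ i → i ≤ j → j ≤ N → p j → p i) :
    (Icc 1 N).filter p = Icc 1 #((Icc 1 N).filter p) := by
  refine eq_of_subset_of_card_le (fun k hk => ?_) (by simp)
  obtain ⟨hk, hpk⟩ := mem_filter.1 hk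
  have hinit : Icc 1 k ⊆ (Icc 1 N).filter p := fun j hj =>
    mem_filter.2 ⟨Icc_subset_Icc_right (mem_Icc.1 hk).2 hj,
      hp j k (mem_Icc.1 hj).1 (mem_Icc.1 hj).2 (mem_Icc.1 hk).2 hpk⟩
  exact mem_Icc.2 ⟨(mem_Icc.1 hk).1, by simpa using card_le_card hinit⟩

lemma sum_Icc_eq_add_sum_Icc_of_eq_one_of_eq_zero {K : Type*} [AddCommMonoidWithOne K]
    {q : ℕ → K} {a b N : ℕ} (hab : a ≤ b) (hbN : b ≤ N)
    (h1 : ∀ k ∈ Icc 1 a, q k = 1) (h0 : ∀ k ∈ Ioc b N, q k = 0) :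
    ∑ k ∈ Icc 1 N, q k = a + ∑ k ∈ Icc (a + 1) b, q k := by
  have hIoc : ∀ n, Icc 1 n = Ioc 0 n := Icc_add_one_left_eq_Ioc 0
  rw [Icc_add_one_left_eq_Ioc, hIoc, ← sum_Ioc_consecutive _ (Nat.zero_le b) hbN,
    ← sum_Ioc_consecutive _ (Nat.zero_le a) hab, ← hIoc, sum_congr rfl h1, sum_eq_zero h0]
  simp

theorem hkr_sharp_general (N R : ℕ) (hR1 : 1 ≤ R) (hRN : R ≤ N) (M q : ℕ → ℝ)
    (hmono : ∀ i j, 1 ≤ i → i ≤ j → j ≤ N → M j ≤ M i)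
    (hMR : 0 < M R)
    (hq : ∀ i, 1 ≤ i → i ≤ N → q i ∈ Set.Icc (0 : ℝ) 1)
    (hqsum : ∑ i ∈ Finset.Icc 1 N, q i ≤ (R : ℝ))
    (R' R'' : ℕ)
    (hR' : R' = ((Finset.Icc 1 N).filter fun k => M R < M k).card)
    (hR''mem : R'' ∈ Finset.Icc 1 N) (hR''eq : M R'' = M R)
    (hR''max : ∀ k ∈ Finset.Icc 1 N, M k = M R → k ≤ R'') :
    (∑ i ∈ Finset.Icc 1 N, q i * M i = ∑ i ∈ Finset.Icc 1 R, M i) ↔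
      ((∀ k ∈ Finset.Icc 1 N, M R < M k → q k = 1) ∧
       (∀ k ∈ Finset.Icc 1 N, M k < M R → q k = 0) ∧
       ∑ k ∈ Finset.Icc (R' + 1) R'', q k = (R : ℝ) - (R' : ℝ)) := by
  obtain ⟨hR''1, hR''N⟩ := mem_Icc.1 hR''mem
  have hRmem : R ∈ Icc 1 N := mem_Icc.2 ⟨hR1, hRN⟩
  have habove : ∀ k ∈ Icc 1 N, M R < M k ↔ k ≤ R' := by
    have hA := filter_Icc_eq_Icc_card (p := fun k => M R < M k)
      fun i j hi hij hjN h => h.trans_le (hmono i j hi hij hjN)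
    intro k hk
    simpa [← hR', hk, (mem_Icc.1 hk).1] using Finset.ext_iff.1 hA k
  have hbelow : ∀ k ∈ Ioc R'' N, M k < M R := by
    intro k hk
    obtain ⟨hR''k, hkN⟩ := mem_Ioc.1 hk
    refine (hR''eq ▸ hmono R'' k hR''1 hR''k.le hkN).lt_of_ne fun h => ?_
    exact hR''k.not_ge (hR''max k (mem_Icc.2 ⟨hR''1.trans hR''k.le, hkN⟩) h)
  have hR'R : R' < R := not_le.1 fun h => lt_irrefl _ ((habove R hRmem).2 h)
  have hRR'' : R ≤ R'' := hR''max R hRmem rfl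
  rw [sum_Icc_eq_sum_posPart_add hR1 hRN hmono, sum_mul_eq_sum_posPart_add_iff
    (fun i hi => hq i (mem_Icc.1 hi).1 (mem_Icc.1 hi).2) hMR hqsum]
  refine and_congr_right fun h1 => and_congr_right fun h0 => ?_
  have hIcc : ∀ k ∈ Icc 1 R', k ∈ Icc 1 N := fun k hk =>
    Icc_subset_Icc_right (hR'R.le.trans hRN) hk
  rw [sum_Icc_eq_add_sum_Icc_of_eq_one_of_eq_zero (hR'R.le.trans hRR'') hR''N
    (fun k hk => h1 k (hIcc k hk) ((habove k (hIcc k hk)).2 (mem_Icc.1 hk).2))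
    (fun k hk => h0 k (Ioc_subset_Icc_self.trans (Icc_subset_Icc_left hR''1) hk) (hbelow k hk))]
  constructor <;> intro h <;> linarith

/-- **Sharpness of the Harper–Klain–Rota lemma.** Let `M_1 ≥ ⋯ ≥ M_N ≥ 0` be reals,
`1 ≤ R ≤ N` with `M_R > 0`, and `q_1, …, q_N ∈ [0,1]` with `q_1 + ⋯ + q_N ≤ R`. Let `R'` be
the number of indices `k` with `M_k > M_R` and `R''` the largest index `k` with
`M_k = M_R`. Then `q_1 M_1 + ⋯ + q_N M_N = M_1 + ⋯ + M_R` if and only if `q_k = 1`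
whenever `M_k > M_R`, `q_k = 0` whenever `M_k < M_R`, and
`q_{R'+1} + ⋯ + q_{R''} = R - R'`. (Indices run over `1, …, N`.) -/
theorem hkr_sharp (N R : ℕ) (hR1 : 1 ≤ R) (hRN : R ≤ N) (M q : ℕ → ℝ)
    (hmono : ∀ i j, 1 ≤ i → i ≤ j → j ≤ N → M j ≤ M i)
    (hnonneg : ∀ i, 1 ≤ i → i ≤ N → 0 ≤ M i)
    (hMR : 0 < M R)
    (hq : ∀ i, 1 ≤ i → i ≤ N → q i ∈ Set.Icc (0 : ℝ) 1)
    (hqsum : ∑ i ∈ Finset.Icc 1 N, q i ≤ (R : ℝ))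
    (R' R'' : ℕ)
    (hR' : R' = ((Finset.Icc 1 N).filter fun k => M R < M k).card)
    (hR''mem : R'' ∈ Finset.Icc 1 N) (hR''eq : M R'' = M R)
    (hR''max : ∀ k ∈ Finset.Icc 1 N, M k = M R → k ≤ R'') :
    (∑ i ∈ Finset.Icc 1 N, q i * M i = ∑ i ∈ Finset.Icc 1 R, M i) ↔
      ((∀ k ∈ Finset.Icc 1 N, M R < M k → q k = 1) ∧
       (∀ k ∈ Finset.Icc 1 N, M k < M R → q k = 0) ∧
       ∑ k ∈ Finset.Icc (R' + 1) R'', q k = (R : ℝ) - (R' : ℝ)) :=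
  hkr_sharp_general N R hR1 hRN M q hmono hMR hq hqsum R' R'' hR' hR''mem hR''eq hR''max
end
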